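/- Suppose f is differentiable, ‖G(X)‖_F ≤ M₁ for all X ∈ Ω, and β ≥ 12·M₁ > 0. Let X* ∈ Ω satisfy ∇h(X*) = 0. Then either (i) X*ᵀX* = I_p and grad f(X*) = 0 (so X* is a first-order stationary point of the problem of minimizing f over S_{n,p}), or (ii) the smallest eigenvalue of the symmetric matrix X*ᵀX* is at most 2·M₁/β. -/

import Mathlib

/-!
At a critical point `X` of `h` the Euclidean gradient `G A(X) - X Φ(XᵀG) + β X N` vanishes, where
`G = G(X)` and `N = XᵀX - I`. Pairing it with `X N`, and using `Nᵀ = N`, `A(X) = I - N/2` and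
`XᵀX = I + N`, gives `β ‖X N‖² = (3/2) ⟨N², XᵀG⟩ ≤ (3/2) ‖N‖² ‖X‖₂ ‖G‖ ≤ (13/8) M₁ ‖N‖²`.
If every eigenvalue of `XᵀX` exceeds `2 M₁ / β`, then `β ‖X N‖² ≥ 2 M₁ ‖N‖²`, which forces `N = 0`;
then `A(X) = I` and the vanishing gradient is exactly `grad f(X) = 0`.
-/

open Matrix

attribute [local instance] Matrix.frobeniusNormedAddCommGroup Matrix.frobeniusNormedSpace

namespace ExPen

noncomputable def finner {n p : ℕ} (A B : Matrix (Fin n) (Fin p) ℝ) : ℝ := (Aᵀ * B).trace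

noncomputable def Phi {p : ℕ} (M : Matrix (Fin p) (Fin p) ℝ) : Matrix (Fin p) (Fin p) ℝ :=
  (1 / 2 : ℝ) • (M + Mᵀ)

noncomputable def Amap {n p : ℕ} (X : Matrix (Fin n) (Fin p) ℝ) : Matrix (Fin p) (Fin p) ℝ :=
  (3 / 2 : ℝ) • (1 : Matrix (Fin p) (Fin p) ℝ) - (1 / 2 : ℝ) • (Xᵀ * X)

noncomputable def g {n p : ℕ} (f : Matrix (Fin n) (Fin p) ℝ → ℝ)
    (X : Matrix (Fin n) (Fin p) ℝ) : ℝ := f (X * Amap X)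

noncomputable def hpen {n p : ℕ} (f : Matrix (Fin n) (Fin p) ℝ → ℝ) (β : ℝ)
    (X : Matrix (Fin n) (Fin p) ℝ) : ℝ := g f X + β / 4 * ‖Xᵀ * X - 1‖ ^ 2

noncomputable def dualCLM {n p : ℕ} (G : Matrix (Fin n) (Fin p) ℝ) :
    Matrix (Fin n) (Fin p) ℝ →L[ℝ] ℝ :=
  LinearMap.toContinuousLinearMap
    { toFun := fun D => (Gᵀ * D).trace
      map_add' := by intro D E; simp [Matrix.mul_add]
      map_smul' := by intro c D; simp [Matrix.mul_smul] }

def HasGradAt {n p : ℕ} (φ : Matrix (Fin n) (Fin p) ℝ → ℝ)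
    (X G : Matrix (Fin n) (Fin p) ℝ) : Prop :=
  HasFDerivAt φ (dualCLM G) X

noncomputable def specNorm {n p : ℕ} (X : Matrix (Fin n) (Fin p) ℝ) : ℝ :=
  ‖LinearMap.toContinuousLinearMap
    (Matrix.toEuclideanLin X : EuclideanSpace ℝ (Fin p) →ₗ[ℝ] EuclideanSpace ℝ (Fin n))‖

lemma posSemidef_tmul {n p : ℕ} (X : Matrix (Fin n) (Fin p) ℝ) : (Xᵀ * X).PosSemidef := by
  simpa [Matrix.conjTranspose_eq_transpose_of_trivial] using
    Matrix.posSemidef_conjTranspose_mul_self X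

/-- `Matrix.PosSemidef.sqrt` as it was defined in Mathlib (Dec 2024); it has since been removed. -/
noncomputable def _root_.Matrix.PosSemidef.sqrt {n : Type*} [Fintype n] [DecidableEq n]
    {A : Matrix n n ℝ} (hA : A.PosSemidef) : Matrix n n ℝ :=
  (hA.1.eigenvectorUnitary : Matrix n n ℝ) * diagonal (Real.sqrt ∘ hA.1.eigenvalues) *
    (star hA.1.eigenvectorUnitary : Matrix n n ℝ)

noncomputable def Pst {n p : ℕ} (X : Matrix (Fin n) (Fin p) ℝ) : Matrix (Fin n) (Fin p) ℝ :=
  X * ((posSemidef_tmul X).sqrt)⁻¹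

section FrobeniusInner

variable {n p k : ℕ}

lemma finner_comm (A B : Matrix (Fin n) (Fin p) ℝ) : finner A B = finner B A := by
  rw [finner, finner, ← trace_transpose, transpose_mul, transpose_transpose]

lemma finner_self (A : Matrix (Fin n) (Fin p) ℝ) : finner A A = ‖A‖ ^ 2 := by
  rw [frobenius_norm_def, ← Real.rpow_natCast, ← Real.rpow_mul (by positivity)]
  norm_num [finner, trace, mul_apply, Finset.sum_comm (γ := Fin n), sq]

lemma abs_finner_le (A B : Matrix (Fin n) (Fin p) ℝ) : |finner A B| ≤ ‖A‖ * ‖B‖ := by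
  have h : finner A B = inner ℝ
      (WithLp.toLp 2 fun i => (WithLp.toLp 2 (A i) : EuclideanSpace ℝ (Fin p)))
      (WithLp.toLp 2 fun i => (WithLp.toLp 2 (B i) : EuclideanSpace ℝ (Fin p))) := by
    simp [finner, trace, mul_apply, PiLp.inner_apply, Finset.sum_comm (γ := Fin n), mul_comm]
  rw [h]
  exact abs_real_inner_le_norm _ _

lemma finner_add_left (A B C : Matrix (Fin n) (Fin p) ℝ) :
    finner (A + B) C = finner A C + finner B C := by
  simp [finner, Matrix.add_mul]

lemma finner_sub_left (A B C : Matrix (Fin n) (Fin p) ℝ) :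
    finner (A - B) C = finner A C - finner B C := by
  simp [finner, Matrix.sub_mul]

lemma finner_smul_left (c : ℝ) (A B : Matrix (Fin n) (Fin p) ℝ) :
    finner (c • A) B = c * finner A B := by
  simp [finner]

lemma finner_add_right (A B C : Matrix (Fin n) (Fin p) ℝ) :
    finner A (B + C) = finner A B + finner A C := by
  simp [finner, Matrix.mul_add]

lemma finner_smul_right (c : ℝ) (A B : Matrix (Fin n) (Fin p) ℝ) :
    finner A (c • B) = c * finner A B := by
  simp [finner]

lemma finner_zero_right (A : Matrix (Fin n) (Fin p) ℝ) : finner A 0 = 0 := by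
  simp [finner]

lemma finner_one_left (A : Matrix (Fin p) (Fin p) ℝ) : finner 1 A = trace A := by
  simp [finner]

lemma finner_mul_left (A : Matrix (Fin n) (Fin k) ℝ) (B : Matrix (Fin k) (Fin p) ℝ)
    (C : Matrix (Fin n) (Fin p) ℝ) : finner (A * B) C = finner B (Aᵀ * C) := by
  simp [finner, Matrix.mul_assoc]

lemma finner_mul_right (A : Matrix (Fin n) (Fin k) ℝ) (B : Matrix (Fin k) (Fin p) ℝ)
    (C : Matrix (Fin n) (Fin p) ℝ) : finner (A * B) C = finner A (C * Bᵀ) := by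
  rw [finner, finner, transpose_mul, Matrix.mul_assoc, trace_mul_comm, Matrix.mul_assoc]

lemma finner_transpose_right (A : Matrix (Fin n) (Fin p) ℝ) (B : Matrix (Fin p) (Fin n) ℝ) :
    finner A Bᵀ = finner Aᵀ B := by
  rw [finner, finner, transpose_transpose, ← transpose_mul, trace_transpose, trace_mul_comm]

lemma finner_transpose_mul_add_transpose_mul (K : Matrix (Fin p) (Fin p) ℝ)
    (X D : Matrix (Fin n) (Fin p) ℝ) :
    finner K (Xᵀ * D + Dᵀ * X) = 2 * finner (X * Phi K) D := by
  have hD : Dᵀ * X = (Xᵀ * D)ᵀ := by rw [transpose_mul, transpose_transpose]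
  rw [hD, finner_add_right, finner_transpose_right, finner_mul_left, Phi, finner_smul_left,
    finner_add_left]
  ring

end FrobeniusInner

section SpectralNorm

variable {n p k : ℕ}

lemma specNorm_nonneg (M : Matrix (Fin n) (Fin p) ℝ) : 0 ≤ specNorm M :=
  norm_nonneg _

lemma specNorm_transpose (M : Matrix (Fin n) (Fin p) ℝ) : specNorm Mᵀ = specNorm M :=
  Matrix.l2_opNorm_conjTranspose (𝕜 := ℝ) M

lemma norm_mulVec_le_specNorm_mul (M : Matrix (Fin n) (Fin p) ℝ) (v : Fin p → ℝ) :
    ‖(WithLp.toLp 2 (M *ᵥ v) : EuclideanSpace ℝ (Fin n))‖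
      ≤ specNorm M * ‖(WithLp.toLp 2 v : EuclideanSpace ℝ (Fin p))‖ :=
  (LinearMap.toContinuousLinearMap (toEuclideanLin M)).le_opNorm _

lemma frobenius_norm_sq_eq_sum_rows {m l : Type*} [Fintype m] [Fintype l] (M : Matrix m l ℝ) :
    ‖M‖ ^ 2 = ∑ i, ‖(WithLp.toLp 2 (M i) : EuclideanSpace ℝ l)‖ ^ 2 :=
  PiLp.norm_sq_eq_of_L2 _ (WithLp.toLp 2 fun i => WithLp.toLp 2 (M i))

lemma frobenius_norm_mul_le_mul_specNorm (B : Matrix (Fin k) (Fin n) ℝ)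
    (A : Matrix (Fin n) (Fin p) ℝ) : ‖B * A‖ ≤ ‖B‖ * specNorm A := by
  have hrow : ∀ i, ‖(WithLp.toLp 2 ((B * A) i) : EuclideanSpace ℝ (Fin p))‖
      ≤ specNorm A * ‖(WithLp.toLp 2 (B i) : EuclideanSpace ℝ (Fin n))‖ := fun i => by
    have h : (B * A) i = Aᵀ *ᵥ B i := by
      ext j; simp [mul_apply, mulVec, dotProduct, mul_comm]
    rw [h, ← specNorm_transpose]
    exact norm_mulVec_le_specNorm_mul Aᵀ (B i)
  refine le_of_pow_le_pow_left₀ two_ne_zero (mul_nonneg (norm_nonneg _) (specNorm_nonneg A)) ?_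
  rw [mul_pow, frobenius_norm_sq_eq_sum_rows, frobenius_norm_sq_eq_sum_rows, Finset.sum_mul]
  gcongr with i
  rw [mul_comm]
  exact pow_le_pow_left₀ (norm_nonneg _) (hrow i) 2 |>.trans_eq (mul_pow _ _ _)

end SpectralNorm

section Eigenvalues

variable {m k : Type*} [Fintype m] [Fintype k] [DecidableEq m]

open scoped MatrixOrder in
lemma posSemidef_sub_smul_one_of_le_eigenvalues {S : Matrix m m ℝ} (hS : S.IsHermitian) {c : ℝ}
    (hc : ∀ i, c ≤ hS.eigenvalues i) : (S - c • 1).PosSemidef := by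
  rw [← Matrix.le_iff, ← Algebra.algebraMap_eq_smul_one,
    algebraMap_le_iff_le_spectrum (ha := hS.isSelfAdjoint), hS.spectrum_real_eq_range_eigenvalues]
  rintro _ ⟨i, rfl⟩
  exact hc i

lemma le_trace_transpose_mul_mul_of_le_eigenvalues {S : Matrix m m ℝ} (hS : S.IsHermitian)
    {c : ℝ} (hc : ∀ i, c ≤ hS.eigenvalues i) (N : Matrix m k ℝ) :
    c * (Nᵀ * N).trace ≤ (Nᵀ * S * N).trace := by
  have h := ((posSemidef_sub_smul_one_of_le_eigenvalues hS hc).conjTranspose_mul_mul_same N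
    ).trace_nonneg
  rw [conjTranspose_eq_transpose_of_trivial, Matrix.mul_sub, Matrix.sub_mul, trace_sub] at h
  simpa [Matrix.mul_assoc] using h

end Eigenvalues

lemma mul_norm_sq_le_norm_mul_sq {n p k : ℕ} {X : Matrix (Fin n) (Fin p) ℝ} {c : ℝ}
    (hc : ∀ i, c ≤ (posSemidef_tmul X).1.eigenvalues i) (N : Matrix (Fin p) (Fin k) ℝ) :
    c * ‖N‖ ^ 2 ≤ ‖X * N‖ ^ 2 := by
  rw [← finner_self, ← finner_self]
  simpa [finner, transpose_mul, Matrix.mul_assoc] using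
    le_trace_transpose_mul_mul_of_le_eigenvalues _ hc N

section Derivative

variable {l m n : Type*} [Fintype l] [Fintype m] [Fintype n]

noncomputable def mulCLM (l m n : Type*) [Fintype l] [Fintype m] [Fintype n] :
    Matrix l m ℝ →L[ℝ] Matrix m n ℝ →L[ℝ] Matrix l n ℝ :=
  (mulLinearMap ℝ).mkContinuous₂ 1 fun A B => by
    simpa using frobenius_norm_mul A B

noncomputable def transposeCLM (m n : Type*) [Fintype m] [Fintype n] :
    Matrix m n ℝ →L[ℝ] Matrix n m ℝ :=
  LinearMap.toContinuousLinearMap (transposeLinearEquiv m n ℝ ℝ).toLinearMap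

lemma HasFDerivAt.matrix_mul {E : Type*} [NormedAddCommGroup E] [NormedSpace ℝ E]
    {F : E → Matrix l m ℝ} {H : E → Matrix m n ℝ}
    {F' : E →L[ℝ] Matrix l m ℝ} {H' : E →L[ℝ] Matrix m n ℝ} {x : E}
    (hF : HasFDerivAt F F' x) (hH : HasFDerivAt H H' x) :
    HasFDerivAt (fun y => F y * H y)
      ((mulCLM l m n).precompR E (F x) H' + (mulCLM l m n).precompL E F' (H x)) x :=
  (mulCLM l m n).hasFDerivAt_of_bilinear hF hH

lemma hasFDerivAt_transpose_mul_self (X : Matrix m n ℝ) :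
    HasFDerivAt (fun Y : Matrix m n ℝ => Yᵀ * Y)
      ((mulCLM n m n).precompR _ Xᵀ (.id ℝ _) + (mulCLM n m n).precompL _ (transposeCLM m n) X)
      X :=
  HasFDerivAt.matrix_mul (transposeCLM m n).hasFDerivAt (hasFDerivAt_id X)

end Derivative

section Gradient

variable {n p k q : ℕ}

lemma dualCLM_apply (G D : Matrix (Fin n) (Fin p) ℝ) : dualCLM G D = finner G D := rfl

lemma HasGradAt.unique {φ : Matrix (Fin n) (Fin p) ℝ → ℝ} {X G₁ G₂ : Matrix (Fin n) (Fin p) ℝ}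
    (h₁ : HasGradAt φ X G₁) (h₂ : HasGradAt φ X G₂) : G₁ = G₂ := by
  have h := congrArg (· (G₁ - G₂)) (HasFDerivAt.unique h₁ h₂)
  simp only [dualCLM_apply] at h
  rw [← sub_eq_zero, ← norm_eq_zero, ← pow_eq_zero_iff two_ne_zero, ← finner_self,
    finner_sub_left, h, sub_self]

lemma HasGradAt.add {φ ψ : Matrix (Fin n) (Fin p) ℝ → ℝ} {X G H : Matrix (Fin n) (Fin p) ℝ}
    (hφ : HasGradAt φ X G) (hψ : HasGradAt ψ X H) :
    HasGradAt (fun Y => φ Y + ψ Y) X (G + H) :=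
  HasFDerivAt.congr_fderiv (HasFDerivAt.add hφ hψ) <| ContinuousLinearMap.ext fun D =>
    (finner_add_left G H D).symm

lemma HasGradAt.const_mul {φ : Matrix (Fin n) (Fin p) ℝ → ℝ} {X G : Matrix (Fin n) (Fin p) ℝ}
    (c : ℝ) (hφ : HasGradAt φ X G) : HasGradAt (fun Y => c * φ Y) X (c • G) :=
  HasFDerivAt.congr_fderiv (HasFDerivAt.const_mul hφ c) <| ContinuousLinearMap.ext fun D =>
    (finner_smul_left c G D).symm

lemma HasGradAt.comp {ψ : Matrix (Fin k) (Fin q) ℝ → ℝ}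
    {Ψ : Matrix (Fin n) (Fin p) ℝ → Matrix (Fin k) (Fin q) ℝ}
    {Ψ' : Matrix (Fin n) (Fin p) ℝ →L[ℝ] Matrix (Fin k) (Fin q) ℝ}
    {X G' : Matrix (Fin n) (Fin p) ℝ} {G : Matrix (Fin k) (Fin q) ℝ}
    (hψ : HasGradAt ψ (Ψ X) G) (hΨ : HasFDerivAt Ψ Ψ' X)
    (hG : ∀ D, finner G (Ψ' D) = finner G' D) :
    HasGradAt (fun Y => ψ (Ψ Y)) X G' :=
  (HasFDerivAt.comp X hψ hΨ).congr_fderiv (ContinuousLinearMap.ext hG)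

lemma hasGradAt_trace (M : Matrix (Fin p) (Fin p) ℝ) : HasGradAt trace M 1 := by
  have h : (trace : Matrix (Fin p) (Fin p) ℝ → ℝ) = dualCLM 1 :=
    funext fun D => (finner_one_left D).symm
  rw [HasGradAt, h]
  exact (dualCLM 1).hasFDerivAt

lemma hasGradAt_norm_sq (M : Matrix (Fin k) (Fin q) ℝ) :
    HasGradAt (fun N => ‖N‖ ^ 2) M ((2 : ℝ) • M) := by
  have h : (fun N : Matrix (Fin k) (Fin q) ℝ => ‖N‖ ^ 2) = fun N => trace (Nᵀ * N) :=
    funext fun N => (finner_self N).symm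
  rw [h]
  refine (hasGradAt_trace _).comp (hasFDerivAt_transpose_mul_self M) fun D => ?_
  change finner 1 (Mᵀ * D + Dᵀ * M) = _
  rw [finner_one_left, trace_add, ← trace_transpose (Dᵀ * M), transpose_mul, transpose_transpose,
    finner_smul_left, finner]
  ring

end Gradient

section PenaltyGradient

variable {n p : ℕ}

lemma amap_eq (X : Matrix (Fin n) (Fin p) ℝ) : Amap X = 1 - (1 / 2 : ℝ) • (Xᵀ * X - 1) := by
  rw [Amap, smul_sub]
  module

lemma isSymm_transpose_mul_self_sub_one (X : Matrix (Fin n) (Fin p) ℝ) :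
    (Xᵀ * X - 1).IsSymm :=
  IsSymm.sub (transpose_mul _ _) isSymm_one

lemma isSymm_amap (X : Matrix (Fin n) (Fin p) ℝ) : (Amap X).IsSymm := by
  rw [amap_eq]
  exact isSymm_one.sub ((isSymm_transpose_mul_self_sub_one X).smul _)

lemma phi_of_isSymm {K : Matrix (Fin p) (Fin p) ℝ} (hK : K.IsSymm) : Phi K = K := by
  rw [Phi, hK.eq, ← two_smul ℝ K, smul_smul]
  norm_num

lemma hasFDerivAt_amap (X : Matrix (Fin n) (Fin p) ℝ) :
    HasFDerivAt Amap (-((1 / 2 : ℝ) • ((mulCLM _ _ _).precompR _ Xᵀ (.id ℝ _)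
      + (mulCLM _ _ _).precompL _ (transposeCLM (Fin n) (Fin p)) X))) X :=
  ((hasFDerivAt_transpose_mul_self X).const_smul (1 / 2 : ℝ)).const_sub _

lemma hasGradAt_g {f : Matrix (Fin n) (Fin p) ℝ → ℝ} {X G : Matrix (Fin n) (Fin p) ℝ}
    (hf : HasGradAt f (X * Amap X) G) :
    HasGradAt (g f) X (G * Amap X - X * Phi (Xᵀ * G)) := by
  have hΨ := HasFDerivAt.matrix_mul (hasFDerivAt_id X) (hasFDerivAt_amap X)
  refine HasGradAt.comp (Ψ := fun Y => Y * Amap Y) hf hΨ fun D => ?_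
  change finner G (X * -((1 / 2 : ℝ) • (Xᵀ * D + Dᵀ * X)) + D * Amap X) = _
  rw [finner_comm, finner_add_left, finner_mul_left, finner_mul_right, (isSymm_amap X).eq,
    ← neg_smul, finner_smul_left, finner_comm _ (Xᵀ * G),
    finner_transpose_mul_add_transpose_mul, finner_sub_left, finner_comm D]
  ring

lemma hasGradAt_penalty (X : Matrix (Fin n) (Fin p) ℝ) :
    HasGradAt (fun Y : Matrix (Fin n) (Fin p) ℝ => ‖Yᵀ * Y - 1‖ ^ 2) X
      ((4 : ℝ) • (X * (Xᵀ * X - 1))) := by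
  refine (hasGradAt_norm_sq _).comp ((hasFDerivAt_transpose_mul_self X).sub_const 1) fun D => ?_
  change finner ((2 : ℝ) • (Xᵀ * X - 1)) (Xᵀ * D + Dᵀ * X) = _
  rw [finner_smul_left, finner_transpose_mul_add_transpose_mul,
    phi_of_isSymm (isSymm_transpose_mul_self_sub_one X), finner_smul_left]
  ring

lemma hasGradAt_hpen {f : Matrix (Fin n) (Fin p) ℝ → ℝ} (β : ℝ) {X G : Matrix (Fin n) (Fin p) ℝ}
    (hf : HasGradAt f (X * Amap X) G) :
    HasGradAt (hpen f β) X (G * Amap X - X * Phi (Xᵀ * G) + β • (X * (Xᵀ * X - 1))) := by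
  have h := (hasGradAt_g hf).add ((hasGradAt_penalty X).const_mul (β / 4))
  rwa [smul_smul, div_mul_cancel₀ β four_ne_zero] at h

end PenaltyGradient

section Stationarity

variable {n p : ℕ}

-- With `K = XᵀG` and `N = XᵀX - I`, the second argument is `Xᵀ ∇g(X)`.
lemma finner_stationarity {K N : Matrix (Fin p) (Fin p) ℝ} (hN : N.IsSymm) :
    finner N (K * (1 - (1 / 2 : ℝ) • N) - (1 + N) * Phi K) = -(3 / 2) * finner (N * N) K := by
  have h₁ : trace (N * Kᵀ) = trace (N * K) := by
    rw [← trace_transpose, transpose_mul, transpose_transpose, hN.eq, trace_mul_comm]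
  have h₂ : trace (N * (N * Kᵀ)) = trace (N * (N * K)) := by
    rw [← trace_transpose]
    simp only [transpose_mul, transpose_transpose, hN.eq]
    rw [Matrix.mul_assoc, trace_mul_comm, Matrix.mul_assoc]
  have h₃ : trace (N * (K * N)) = trace (N * (N * K)) := by
    rw [trace_mul_comm, Matrix.mul_assoc, trace_mul_comm, Matrix.mul_assoc]
  simp only [finner, hN.eq, transpose_mul, Phi, Matrix.mul_sub, Matrix.mul_add, Matrix.add_mul,
    Matrix.mul_smul, Matrix.mul_one, Matrix.one_mul, trace_add, trace_sub, trace_smul,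
    smul_eq_mul, Matrix.mul_assoc, h₁, h₂, h₃]
  ring

lemma mul_norm_sq_eq_of_gradient_eq_zero {X G : Matrix (Fin n) (Fin p) ℝ} {β : ℝ}
    (hE : G * Amap X - X * Phi (Xᵀ * G) + β • (X * (Xᵀ * X - 1)) = 0) :
    β * ‖X * (Xᵀ * X - 1)‖ ^ 2
      = (3 / 2) * finner ((Xᵀ * X - 1) * (Xᵀ * X - 1)) (Xᵀ * G) := by
  set N := Xᵀ * X - 1 with hN
  have hXX : Xᵀ * X = 1 + N := by rw [hN]; abel
  have h : Xᵀ * (G * Amap X - X * Phi (Xᵀ * G) + β • (X * N))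
      = (Xᵀ * G) * (1 - (1 / 2 : ℝ) • N) - (1 + N) * Phi (Xᵀ * G) + β • (Xᵀ * (X * N)) := by
    rw [amap_eq, ← hN, Matrix.mul_add, Matrix.mul_sub, Matrix.mul_smul, ← Matrix.mul_assoc Xᵀ G,
      ← Matrix.mul_assoc Xᵀ X, hXX]
  rw [hE, Matrix.mul_zero] at h
  have h' := congrArg (finner N) h
  rw [finner_add_right, finner_stationarity (isSymm_transpose_mul_self_sub_one X),
    finner_smul_right, ← finner_mul_left X N, finner_self, finner_zero_right] at h'
  linarith

lemma transpose_mul_self_eq_one_of_gradient_eq_zero {X G : Matrix (Fin n) (Fin p) ℝ}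
    {β M₁ : ℝ} (hβ : 0 < β) (hM₁ : 0 < M₁) (hX : specNorm X ≤ 13 / 12) (hG : ‖G‖ ≤ M₁)
    (heig : ∀ i, 2 * M₁ / β < (posSemidef_tmul X).1.eigenvalues i)
    (hE : G * Amap X - X * Phi (Xᵀ * G) + β • (X * (Xᵀ * X - 1)) = 0) : Xᵀ * X = 1 := by
  set N := Xᵀ * X - 1
  have hlow : 2 * M₁ / β * ‖N‖ ^ 2 ≤ ‖X * N‖ ^ 2 :=
    mul_norm_sq_le_norm_mul_sq (fun i => (heig i).le) N
  have hXG : ‖Xᵀ * G‖ ≤ 13 / 12 * M₁ :=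
    calc ‖Xᵀ * G‖ = ‖Gᵀ * X‖ := by
          rw [← frobenius_norm_transpose, transpose_mul, transpose_transpose]
      _ ≤ ‖Gᵀ‖ * specNorm X := frobenius_norm_mul_le_mul_specNorm _ _
      _ ≤ 13 / 12 * M₁ := by
          rw [frobenius_norm_transpose, mul_comm]
          gcongr
  have hup : finner (N * N) (Xᵀ * G) ≤ ‖N‖ ^ 2 * (13 / 12 * M₁) :=
    calc finner (N * N) (Xᵀ * G) ≤ ‖N * N‖ * ‖Xᵀ * G‖ := (le_abs_self _).trans (abs_finner_le _ _)
      _ ≤ ‖N‖ ^ 2 * (13 / 12 * M₁) := by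
          rw [sq]
          gcongr
          exact frobenius_norm_mul N N
  have hkey := mul_norm_sq_eq_of_gradient_eq_zero hE
  have hN : ‖N‖ ^ 2 = 0 := by
    have h2 : β * (2 * M₁ / β) = 2 * M₁ := by field_simp
    nlinarith [sq_nonneg ‖N‖]
  exact sub_eq_zero.mp (norm_eq_zero.mp (pow_eq_zero_iff two_ne_zero |>.mp hN))

end Stationarity

theorem statement_6 {n p : ℕ} (f : Matrix (Fin n) (Fin p) ℝ → ℝ) (β M₁ : ℝ)
    (gradf : Matrix (Fin n) (Fin p) ℝ → Matrix (Fin n) (Fin p) ℝ)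
    (hgradf : ∀ Y, HasGradAt f Y (gradf Y))
    (hG : ∀ X : Matrix (Fin n) (Fin p) ℝ, specNorm X ≤ 13 / 12 →
      ‖gradf (X * Amap X)‖ ≤ M₁)
    (hM₁ : 0 < M₁) (hβ : 12 * M₁ ≤ β)
    (Xs : Matrix (Fin n) (Fin p) ℝ) (hΩ : specNorm Xs ≤ 13 / 12)
    (hstat : HasGradAt (hpen f β) Xs 0) :
    (Xsᵀ * Xs = 1 ∧ gradf Xs - Xs * Phi (Xsᵀ * gradf Xs) = 0) ∨
    (∃ i : Fin p, (posSemidef_tmul Xs).1.eigenvalues i ≤ 2 * M₁ / β) := by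
  by_cases hsmall : ∃ i, (posSemidef_tmul Xs).1.eigenvalues i ≤ 2 * M₁ / β
  · exact Or.inr hsmall
  push Not at hsmall
  have hE := (hasGradAt_hpen β (hgradf (Xs * Amap Xs))).unique hstat
  have hXX := transpose_mul_self_eq_one_of_gradient_eq_zero (by linarith) hM₁ hΩ (hG Xs hΩ)
    hsmall hE
  have hA : Amap Xs = 1 := by
    rw [amap_eq, hXX, sub_self, smul_zero, sub_zero]
  refine Or.inl ⟨hXX, ?_⟩
  simpa [hA, hXX] using hE

end ExPen
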